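/- arXiv:2511.19354 — 3 statements merged into one kernel-verified Lean document; each statement's English description precedes it below -/
import Mathlib

section
/- Fix a ladder system on ω₁. Let u = (u_α)_{α<ω₁} be a sequence of nonprincipal ultrafilters in βℕ. Let X, Y ⊆ ω₁, let f^X and f^Y be admissible families for the X-modification u^X and the Y-modification u^Y respectively (with respect to the same ladder system), and write v_{X,α} := f̃^X_α(u^X_α) and v_{Y,α} := f̃^Y_α(u^Y_α). Then for all β ≤ α < ω₁, X ⊆ Y implies v_{X,β} ≤_RK v_{Y,α}. -/
/-- The tensor (Fubini) product of ultrafilters: `S ∈ tensor u v` iff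
`{x | {y | (x, y) ∈ S} ∈ v} ∈ u`. -/
def tensor {X Y : Type*} (u : Ultrafilter X) (v : Ultrafilter Y) : Ultrafilter (X × Y) :=
  u.bind fun x => v.map fun y => (x, y)

/-- The Rudin–Keisler preorder: `u ≤_RK v` iff `u` is the image of `v` under some map. -/
def RKLE {X Y : Type*} (u : Ultrafilter X) (v : Ultrafilter Y) : Prop :=
  ∃ f : Y → X, Ultrafilter.map f v = u

/-- Isomorphism of ultrafilters: image under a bijection. -/
def UIso {X Y : Type*} (u : Ultrafilter X) (v : Ultrafilter Y) : Prop :=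
  ∃ f : Y → X, Function.Bijective f ∧ Ultrafilter.map f v = u

/-- An ultrafilter is principal iff it is `pure x` for some point `x`. -/
def IsPrincipal {X : Type*} (u : Ultrafilter X) : Prop := ∃ x, u = pure x

/-- A weak P-point: a nonprincipal ultrafilter on `ℕ` not in the closure of any countable
set of ultrafilters avoiding it and all principal ultrafilters. -/
def WeakPPoint (u : Ultrafilter ℕ) : Prop :=
  ¬ IsPrincipal u ∧ ∀ A : Set (Ultrafilter ℕ), A.Countable → u ∉ A →
    (∀ x ∈ A, ¬ IsPrincipal x) → u ∉ closure A

/-- A space `Z` is `u`-compact iff every pushforward of `u` to `Z` converges. -/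
def UCompact {X : Type*} (u : Ultrafilter X) (Z : Type*) [TopologicalSpace Z] : Prop :=
  ∀ f : X → Z, ∃ z : Z, ↑(Ultrafilter.map f u) ≤ nhds z

/-- The Comfort preorder: `u ≤_C v` iff every `v`-compact space is `u`-compact. -/
def ComfortLE {X Y : Type*} (u : Ultrafilter X) (v : Ultrafilter Y) : Prop :=
  ∀ (Z : Type*) [TopologicalSpace Z], UCompact v Z → UCompact u Z

/-- The first uncountable ordinal `ω₁`. -/
noncomputable def omega1 : Ordinal := (Cardinal.aleph 1).ord

/-- A ladder system on `ω₁`: for each nonzero limit `α < ω₁`, a strictly increasing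
`ω`-sequence of ordinals cofinal in `α`. -/
def IsLadderSystem (L : Ordinal → ℕ → Ordinal) : Prop :=
  ∀ α : Ordinal, α < omega1 → Order.IsSuccLimit α →
    StrictMono (L α) ∧ (∀ i : ℕ, L α i < α) ∧ ∀ β < α, ∃ i : ℕ, β ≤ L α i

/-- `vSeq u f α = f̃_α(u_α)`. -/
noncomputable def vSeq (u : Ordinal → Ultrafilter ℕ) (f : Ordinal → ℕ → Ultrafilter ℕ)
    (α : Ordinal) : Ultrafilter ℕ :=
  Ultrafilter.extend (f α) (u α)

/-- `(f_α)_{α<ω₁}` is admissible for `u = (u_α)_{α<ω₁}` (w.r.t. the ladder system `L`):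
writing `v_α := f̃_α(u_α)`, the map `f_0` is injective with principal values; at a successor
`β+1`, `f_{β+1}` is injective with discrete range and all values isomorphic to `v_β`; at a
nonzero limit `α`, `f_α` is injective with discrete range and `f_α(i) ≅ v_{α_i}`. -/
def Admissible (L : Ordinal → ℕ → Ordinal) (u : Ordinal → Ultrafilter ℕ)
    (f : Ordinal → ℕ → Ultrafilter ℕ) : Prop :=
  (Function.Injective (f 0) ∧ ∀ i : ℕ, IsPrincipal (f 0 i)) ∧
  (∀ β : Ordinal, β + 1 < omega1 →
    Function.Injective (f (β + 1)) ∧ DiscreteTopology (Set.range (f (β + 1))) ∧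
    ∀ i : ℕ, UIso (f (β + 1) i) (vSeq u f β)) ∧
  ∀ α : Ordinal, α < omega1 → Order.IsSuccLimit α →
    Function.Injective (f α) ∧ DiscreteTopology (Set.range (f α)) ∧
    ∀ i : ℕ, UIso (f α i) (vSeq u f (L α i))

open Classical in
/-- The `X`-modification of `u`: keep `u_α` for `α ∈ X ∪ Lim(ω₁)` and replace the
remaining values by the principal ultrafilter `pure 0`. -/
noncomputable def modif (u : Ordinal → Ultrafilter ℕ) (X : Set Ordinal)
    (α : Ordinal) : Ultrafilter ℕ :=
  if α ∈ X ∨ (Order.IsSuccLimit α ∧ α < omega1) then u α else pure 0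

/-!
`Ultrafilter.extend f u` is the `u`-sum `u.bind f` of the ultrafilters `f i`. When `f` is
injective with discrete range, a single map `p` to `ℕ` with `p⁻¹' {i} ∈ f i` separates the
summands, so witnesses `g i ≤_RK f i` can be glued along `p`: if `g i ≤_RK f i` for `w`-almost
all `i`, then `w.bind g ≤_RK w.bind f`. The theorem follows by induction on `α`: at successors
and limits the admissible families are compared summand by summand through the induction
hypothesis (at a limit `α < ω₁`, `u_α` is nonprincipal, so every tail of the ladder is
`u_α`-large), while at `0` and at successors outside `X` the ultrafilter `u^X_α` is principal.
-/

open Function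

namespace Ultrafilter

variable {α β : Type*}

theorem extend_eq_bind (f : α → Ultrafilter β) (u : Ultrafilter α) :
    Ultrafilter.extend f u = u.bind f := by
  rw [ultrafilter_extend_eq_iff, ultrafilter_converges_iff]
  rfl

theorem bind_const (u : Ultrafilter α) (v : Ultrafilter β) : (u.bind fun _ => v) = v :=
  ext fun _ => Filter.eventually_const

theorem pure_bind (a : α) (f : α → Ultrafilter β) : (pure a : Ultrafilter α).bind f = f a := rfl

theorem bind_pure_comp (u : Ultrafilter α) (h : α → β) : u.bind (fun a => pure (h a)) = u.map h :=
  rfl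

theorem map_bind (u : Ultrafilter α) (f : α → Ultrafilter β) {γ : Type*} (k : β → γ) :
    (u.bind f).map k = u.bind fun a => (f a).map k := rfl

theorem bind_congr {u : Ultrafilter α} {f g : α → Ultrafilter β} (h : ∀ᶠ a in u, f a = g a) :
    u.bind f = u.bind g := by
  ext s
  exact Filter.eventually_congr (h.mono fun a ha => by simp [ha])

end Ultrafilter

section RudinKeisler

variable {α β γ : Type*}

theorem RKLE.trans {u : Ultrafilter α} {v : Ultrafilter β} {w : Ultrafilter γ}
    (huv : RKLE u v) (hvw : RKLE v w) : RKLE u w := by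
  obtain ⟨f, rfl⟩ := huv
  obtain ⟨g, rfl⟩ := hvw
  exact ⟨f ∘ g, Ultrafilter.map_map ..⟩

theorem rkle_map (f : β → α) (v : Ultrafilter β) : RKLE (v.map f) v := ⟨f, rfl⟩

theorem rkle_map_of_injective {f : α → β} (hf : Injective f) (u : Ultrafilter α) :
    RKLE u (u.map f) := by
  have : Nonempty α := ⟨(u.nonempty_of_mem Filter.univ_mem).some⟩
  exact ⟨invFun f, by rw [Ultrafilter.map_map, invFun_comp hf, Ultrafilter.map_id]⟩

theorem IsPrincipal.rkle {u : Ultrafilter α} (hu : IsPrincipal u) (v : Ultrafilter β) :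
    RKLE u v := by
  obtain ⟨a, rfl⟩ := hu
  exact ⟨fun _ => a, Ultrafilter.coe_injective (Filter.map_const ..)⟩

theorem UIso.rkle {u : Ultrafilter α} {v : Ultrafilter β} (h : UIso u v) : RKLE u v :=
  let ⟨f, _, hf⟩ := h; ⟨f, hf⟩

theorem UIso.rkle_symm {u : Ultrafilter α} {v : Ultrafilter β} (h : UIso u v) : RKLE v u := by
  obtain ⟨f, hf, rfl⟩ := h
  exact rkle_map_of_injective hf.1 v

end RudinKeisler

section DiscreteFamily

variable {α β : Type*}

theorem exists_mem_forall_ne_notMem_of_discreteTopology_range {ι : Type*}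
    {f : ι → Ultrafilter α} (hf : Injective f) (hd : DiscreteTopology (Set.range f)) (i : ι) :
    ∃ A ∈ f i, ∀ j ≠ i, A ∉ f j := by
  obtain ⟨U, hU, hUi⟩ := isOpen_induced_iff.mp
    (isOpen_discrete ({⟨f i, i, rfl⟩} : Set (Set.range f)))
  have hiU : f i ∈ U := (Set.ext_iff.mp hUi ⟨f i, i, rfl⟩).mpr rfl
  obtain ⟨_, ⟨A, rfl⟩, hiA, hAU⟩ := ultrafilterBasis_is_basis.exists_subset_of_mem_open hiU hU
  refine ⟨A, hiA, fun j hji hjA => hji (hf ?_)⟩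
  have : (⟨f j, j, rfl⟩ : Set.range f) ∈ Subtype.val ⁻¹' U := hAU hjA
  rw [hUi] at this
  exact congrArg Subtype.val this

variable {f : ℕ → Ultrafilter α}

theorem exists_preimage_singleton_mem_of_discreteTopology_range (hf : Injective f)
    (hd : DiscreteTopology (Set.range f)) : ∃ p : α → ℕ, ∀ i, p ⁻¹' {i} ∈ f i := by
  classical
  choose A hA hAne using exists_mem_forall_ne_notMem_of_discreteTopology_range hf hd
  refine ⟨fun x => if h : ∃ i, x ∈ A i then Nat.find h else 0, fun i => ?_⟩
  have hfirst : ∀ᶠ x in f i, x ∈ A i ∧ ∀ j ∈ Set.Iio i, x ∉ A j :=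
    Filter.Eventually.and (hA i) <| (Set.finite_Iio i).eventually_all.mpr fun j hj =>
      Ultrafilter.compl_mem_iff_notMem.mpr (hAne j i (ne_of_lt hj).symm)
  filter_upwards [hfirst] with x ⟨hxi, hxj⟩
  have h : ∃ i, x ∈ A i := ⟨i, hxi⟩
  simp only [Set.mem_preimage, Set.mem_singleton_iff, dif_pos h]
  exact (Nat.find_eq_iff h).mpr ⟨hxi, hxj⟩

theorem bind_rkle_bind {w : Ultrafilter ℕ} {g : ℕ → Ultrafilter β} (hf : Injective f)
    (hd : DiscreteTopology (Set.range f)) (h : ∀ᶠ i in w, RKLE (g i) (f i)) :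
    RKLE (w.bind g) (w.bind f) := by
  obtain ⟨p, hp⟩ := exists_preimage_singleton_mem_of_discreteTopology_range hf hd
  have : Nonempty β := ⟨((g 0).nonempty_of_mem Filter.univ_mem).some⟩
  have hK : ∀ i, ∃ k : α → β, RKLE (g i) (f i) → (f i).map k = g i := fun i => by
    by_cases hi : RKLE (g i) (f i)
    exacts [hi.imp fun k hk _ => hk, ⟨fun _ => Classical.arbitrary β, fun h => absurd h hi⟩]
  choose K hK using hK
  refine ⟨fun x => K (p x) x, ?_⟩
  rw [Ultrafilter.map_bind]
  refine Ultrafilter.bind_congr ?_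
  filter_upwards [h] with i hi
  rw [← hK i hi]
  refine Ultrafilter.coe_injective (Filter.map_congr ?_)
  filter_upwards [hp i] with x hx
  rw [Set.mem_preimage, Set.mem_singleton_iff] at hx
  rw [hx]

theorem rkle_bind_of_eventually_rkle {w : Ultrafilter ℕ} {t : Ultrafilter β} (hf : Injective f)
    (hd : DiscreteTopology (Set.range f)) (h : ∀ᶠ i in w, RKLE t (f i)) :
    RKLE t (w.bind f) :=
  w.bind_const t ▸ bind_rkle_bind hf hd h

end DiscreteFamily

theorem eventually_ge_of_not_isPrincipal {w : Ultrafilter ℕ} (hw : ¬IsPrincipal w) (i : ℕ) :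
    ∀ᶠ j in w, i ≤ j :=
  (w.le_cofinite_or_eq_pure.resolve_right hw).trans Nat.cofinite_eq_atTop.le
    (Filter.eventually_ge_atTop i)

theorem vSeq_eq_bind (u : Ordinal → Ultrafilter ℕ) (f : Ordinal → ℕ → Ultrafilter ℕ)
    (α : Ordinal) : vSeq u f α = (u α).bind (f α) :=
  Ultrafilter.extend_eq_bind ..

section Admissible

variable {β : Type*} {L : Ordinal → ℕ → Ordinal} {a b : Ordinal → Ultrafilter ℕ}
  {fa fb : Ordinal → ℕ → Ultrafilter ℕ} {γ α : Ordinal}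

theorem rkle_vSeq_succ (hb : Admissible L b fb) (hγ : γ + 1 < omega1) {t : Ultrafilter β}
    (h : RKLE t (vSeq b fb γ)) : RKLE t (vSeq b fb (γ + 1)) := by
  obtain ⟨hinj, hd, hiso⟩ := hb.2.1 γ hγ
  rw [vSeq_eq_bind]
  exact rkle_bind_of_eventually_rkle hinj hd
    (Filter.Eventually.of_forall fun i => h.trans (hiso i).rkle_symm)

theorem rkle_vSeq_of_isSuccLimit (hb : Admissible L b fb) (hα : α < omega1)
    (hlim : Order.IsSuccLimit α) (hbα : ¬IsPrincipal (b α)) {t : Ultrafilter β} (i : ℕ)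
    (h : ∀ j, i ≤ j → RKLE t (vSeq b fb (L α j))) : RKLE t (vSeq b fb α) := by
  obtain ⟨hinj, hd, hiso⟩ := hb.2.2 α hα hlim
  rw [vSeq_eq_bind]
  exact rkle_bind_of_eventually_rkle hinj hd <|
    (eventually_ge_of_not_isPrincipal hbα i).mono fun j hj => (h j hj).trans (hiso j).rkle_symm

theorem vSeq_zero_rkle_vSeq_zero (ha : Admissible L a fa) (hb : Admissible L b fb)
    (hab : a 0 = b 0 ∨ IsPrincipal (a 0)) : RKLE (vSeq a fa 0) (vSeq b fb 0) := by
  obtain ⟨-, hpa⟩ := ha.1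
  obtain ⟨hinj, hpb⟩ := hb.1
  choose pa hpa using hpa
  choose pb hpb using hpb
  rw [funext hpb] at hinj
  rw [vSeq_eq_bind, vSeq_eq_bind, funext hpa, funext hpb, Ultrafilter.bind_pure_comp,
    Ultrafilter.bind_pure_comp]
  rcases hab with hab | ⟨n, hn⟩
  · rw [hab]
    exact (rkle_map pa _).trans (rkle_map_of_injective hinj.of_comp _)
  · rw [hn, Ultrafilter.map_pure]
    exact IsPrincipal.rkle ⟨_, rfl⟩ _

theorem vSeq_succ_rkle_vSeq_succ (ha : Admissible L a fa) (hb : Admissible L b fb)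
    (hγ : γ + 1 < omega1) (hab : a (γ + 1) = b (γ + 1) ∨ IsPrincipal (a (γ + 1)))
    (h : RKLE (vSeq a fa γ) (vSeq b fb γ)) : RKLE (vSeq a fa (γ + 1)) (vSeq b fb (γ + 1)) := by
  obtain ⟨-, -, hisoA⟩ := ha.2.1 γ hγ
  obtain ⟨hinj, hd, hisoB⟩ := hb.2.1 γ hγ
  have hstep : ∀ i, RKLE (fa (γ + 1) i) (vSeq b fb γ) := fun i => (hisoA i).rkle.trans h
  rcases hab with hab | ⟨n, hn⟩
  · rw [vSeq_eq_bind, vSeq_eq_bind, hab]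
    exact bind_rkle_bind hinj hd
      (Filter.Eventually.of_forall fun i => (hstep i).trans (hisoB i).rkle_symm)
  · rw [vSeq_eq_bind a, hn, Ultrafilter.pure_bind]
    exact rkle_vSeq_succ hb hγ (hstep n)

theorem vSeq_rkle_vSeq_of_isSuccLimit (ha : Admissible L a fa) (hb : Admissible L b fb)
    (hα : α < omega1) (hlim : Order.IsSuccLimit α) (hab : a α = b α)
    (h : ∀ i, RKLE (vSeq a fa (L α i)) (vSeq b fb (L α i))) :
    RKLE (vSeq a fa α) (vSeq b fb α) := by
  obtain ⟨-, -, hisoA⟩ := ha.2.2 α hα hlim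
  obtain ⟨hinj, hd, hisoB⟩ := hb.2.2 α hα hlim
  rw [vSeq_eq_bind, vSeq_eq_bind, hab]
  exact bind_rkle_bind hinj hd <| Filter.Eventually.of_forall fun i =>
    ((hisoA i).rkle.trans (h i)).trans (hisoB i).rkle_symm

end Admissible

theorem modif_eq_or_isPrincipal (u : Ordinal → Ultrafilter ℕ) {X Y : Set Ordinal} (hXY : X ⊆ Y)
    (α : Ordinal) : modif u X α = modif u Y α ∨ IsPrincipal (modif u X α) := by
  unfold modif
  split_ifs with hX hY
  · exact Or.inl rfl
  · exact absurd (hX.imp_left (@hXY α)) hY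
  all_goals exact Or.inr ⟨0, rfl⟩

theorem modif_of_isSuccLimit (u : Ordinal → Ultrafilter ℕ) (X : Set Ordinal) {α : Ordinal}
    (hlim : Order.IsSuccLimit α) (hα : α < omega1) : modif u X α = u α :=
  if_pos (Or.inr ⟨hlim, hα⟩)

theorem stmt12 (L : Ordinal → ℕ → Ordinal) (hL : IsLadderSystem L)
    (u : Ordinal → Ultrafilter ℕ)
    (hu : ∀ α : Ordinal, α < omega1 → ¬ IsPrincipal (u α))
    (X Y : Set Ordinal) (fX fY : Ordinal → ℕ → Ultrafilter ℕ)
    (hfX : Admissible L (modif u X) fX) (hfY : Admissible L (modif u Y) fY) :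
    ∀ β α : Ordinal, β ≤ α → α < omega1 → X ⊆ Y →
      RKLE (vSeq (modif u X) fX β) (vSeq (modif u Y) fY α) := by
  intro β α hβα hα hXY
  induction α using WellFoundedLT.induction generalizing β with | _ α IH
  have IH' : ∀ γ < α, ∀ β ≤ γ, RKLE (vSeq (modif u X) fX β) (vSeq (modif u Y) fY γ) :=
    fun γ hγ β hβ => IH γ hγ β hβ (hγ.trans hα)
  rcases Ordinal.zero_or_succ_or_isSuccLimit α with rfl | ⟨γ, rfl⟩ | hlim
  · rw [nonpos_iff_eq_zero.mp hβα]
    exact vSeq_zero_rkle_vSeq_zero hfX hfY (modif_eq_or_isPrincipal u hXY 0)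
  · rw [Order.succ_eq_add_one] at *
    have hγ : γ < γ + 1 := Order.lt_add_one_iff.mpr le_rfl
    rcases hβα.lt_or_eq with hβ | rfl
    · exact rkle_vSeq_succ hfY hα (IH' γ hγ β (Order.lt_add_one_iff.mp hβ))
    · exact vSeq_succ_rkle_vSeq_succ hfX hfY hα (modif_eq_or_isPrincipal u hXY _)
        (IH' γ hγ γ le_rfl)
  · obtain ⟨hmono, hlt, hcof⟩ := hL α hα hlim
    rcases hβα.lt_or_eq with hβ | rfl
    · obtain ⟨i, hi⟩ := hcof β hβ
      have hα' : ¬IsPrincipal (modif u Y α) := modif_of_isSuccLimit u Y hlim hα ▸ hu α hα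
      exact rkle_vSeq_of_isSuccLimit hfY hα hlim hα' i fun j hj =>
        IH' _ (hlt j) β (hi.trans (hmono.monotone hj))
    · exact vSeq_rkle_vSeq_of_isSuccLimit hfX hfY hα hlim
        ((modif_of_isSuccLimit u X hlim hα).trans (modif_of_isSuccLimit u Y hlim hα).symm)
        fun i => IH' _ (hlt i) _ le_rfl
end

section
/- Let K be a type of cardinality at most 2^ℵ₀. A function f : Ultrafilter K → βℕ is continuous if and only if there exist g : K × ℕ → ℕ and v ∈ βℕ such that f(u) = Ultrafilter.map g (u ⊗ v) for every u ∈ Ultrafilter K. -/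
open Filter Set Function

namespace Ultrafilter

theorem mem_bind {X Y : Type*} {u : Ultrafilter X} {ψ : X → Ultrafilter Y} {s : Set Y} :
    s ∈ u.bind ψ ↔ {x | s ∈ ψ x} ∈ u := Iff.rfl

theorem pure_bind_s17 {X Y : Type*} (x : X) (ψ : X → Ultrafilter Y) :
    (pure x : Ultrafilter X).bind ψ = ψ x :=
  Ultrafilter.ext fun _ => mem_bind.trans mem_pure

theorem continuous_bind {X Y : Type*} (ψ : X → Ultrafilter Y) :
    Continuous fun u : Ultrafilter X => u.bind ψ := by
  rw [ultrafilterBasis_is_basis.continuous_iff]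
  rintro _ ⟨s, rfl⟩
  exact ultrafilter_isOpen_basic {x | s ∈ ψ x}

end Ultrafilter

theorem map_tensor {X Y Z : Type*} (g : X × Y → Z) (u : Ultrafilter X) (v : Ultrafilter Y) :
    Ultrafilter.map g (tensor u v) = u.bind fun x => v.map fun y => g (x, y) :=
  rfl

theorem continuous_map_tensor {X Y Z : Type*} (g : X × Y → Z) (v : Ultrafilter Y) :
    Continuous fun u : Ultrafilter X => Ultrafilter.map g (tensor u v) :=
  Ultrafilter.continuous_bind fun x => v.map fun y => g (x, y)

theorem map_tensor_pure {X Y Z : Type*} (g : X × Y → Z) (x : X) (v : Ultrafilter Y) :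
    Ultrafilter.map g (tensor (pure x) v) = v.map fun y => g (x, y) :=
  (map_tensor g _ v).trans (Ultrafilter.pure_bind_s17 _ _)

theorem exists_injective_restrict_of_injective {ι : Type*} [Finite ι] {c : ι → ℕ → Bool}
    (hc : Injective c) : ∃ n : ℕ, Injective fun i (m : Fin n) => c i m := by
  have : ∀ᶠ n in atTop, ∀ i j, i ≠ j → (fun m : Fin n => c i m) ≠ fun m : Fin n => c j m := by
    refine eventually_all.2 fun i => eventually_all.2 fun j => ?_
    by_cases hij : i = j
    · exact .of_forall fun _ h => (h hij).elim
    obtain ⟨m, hm⟩ := Function.ne_iff.1 (hc.ne hij)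
    filter_upwards [eventually_gt_atTop m] with n hn _
    exact fun h => hm (congrFun h ⟨m, hn⟩)
  obtain ⟨n, hn⟩ := this.exists
  exact ⟨n, fun i j h => by_contra fun hij => hn i j hij h⟩

theorem exists_independent_functions_of_injective {K : Type*} {e : K → ℕ → Bool}
    (he : Injective e) :
    ∃ F : K → ℕ → ℕ, ∀ (s : Finset K) (a : K → ℕ), ∃ m, ∀ x ∈ s, F x m = a x := by
  let D := Σ n : ℕ, (Fin n → Bool) → ℕ
  obtain ⟨E⟩ : Nonempty (ℕ ≃ D) := nonempty_equiv_of_countable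
  refine ⟨fun x m => (E m).2 fun i => e x i, fun s a => ?_⟩
  obtain ⟨n, hn⟩ := exists_injective_restrict_of_injective (c := fun x : s => e x)
    (he.comp Subtype.val_injective)
  refine ⟨E.symm ⟨n, extend (fun (x : s) (i : Fin n) => e x i) (fun x => a x) 0⟩,
    fun x hx => ?_⟩
  dsimp only
  rw [E.apply_symm_apply]
  exact hn.extend_apply (fun x : s => a x) 0 ⟨x, hx⟩

theorem exists_independent_functions {K : Type*}
    (hK : Cardinal.mk K ≤ (2 : Cardinal) ^ Cardinal.aleph0) :
    ∃ F : K → ℕ → ℕ, ∀ (s : Finset K) (a : K → ℕ), ∃ m, ∀ x ∈ s, F x m = a x := by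
  have : Cardinal.lift.{0} (Cardinal.mk K) ≤ Cardinal.lift (Cardinal.mk (ℕ → Bool)) := by
    simpa [Cardinal.mk_arrow] using hK
  obtain ⟨e⟩ := Cardinal.lift_mk_le'.1 this
  exact exists_independent_functions_of_injective e.injective

theorem exists_map_eq_of_independent {K D Y : Type*} {F : K → D → Y}
    (hF : ∀ (s : Finset K) (a : K → Y), ∃ m, ∀ x ∈ s, F x m = a x)
    (φ : K → Ultrafilter Y) : ∃ v : Ultrafilter D, ∀ x, v.map (F x) = φ x := by
  let G : D → K → Y := fun m x => F x m
  let Φ : Filter (K → Y) := Filter.pi fun x => φ x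
  have : (comap G Φ).NeBot := by
    refine comap_neBot_iff.2 fun t ht => ?_
    obtain ⟨I, A, hA, hIt⟩ := mem_pi'.1 ht
    choose a ha using fun x => Ultrafilter.nonempty_of_mem (hA x)
    obtain ⟨m, hm⟩ := hF I a
    refine ⟨m, hIt fun x hx => ?_⟩
    simpa only [G, hm x hx] using ha x
  refine ⟨Ultrafilter.of (comap G Φ), fun x => Ultrafilter.eq_of_le ?_⟩
  calc ((Ultrafilter.of (comap G Φ)).map (F x) : Filter Y)
      = map (eval x) (map G (Ultrafilter.of (comap G Φ))) := by
        rw [Ultrafilter.coe_map, Filter.map_map]; rfl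
    _ ≤ map (eval x) Φ :=
        map_mono (map_le_iff_le_comap.2 (Ultrafilter.of_le _))
    _ ≤ φ x := tendsto_eval_pi _ x

theorem stmt17 (K : Type*) (hK : Cardinal.mk K ≤ (2 : Cardinal) ^ Cardinal.aleph0)
    (f : Ultrafilter K → Ultrafilter ℕ) :
    Continuous f ↔ ∃ g : K × ℕ → ℕ, ∃ v : Ultrafilter ℕ,
      ∀ u : Ultrafilter K, f u = Ultrafilter.map g (tensor u v) := by
  refine ⟨fun hf => ?_, fun ⟨g, v, h⟩ => funext h ▸ continuous_map_tensor g v⟩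
  obtain ⟨F, hF⟩ := exists_independent_functions hK
  obtain ⟨v, hv⟩ := exists_map_eq_of_independent hF (f ∘ pure)
  refine ⟨fun p => F p.1 p.2, v, congrFun ?_⟩
  refine Continuous.ext_on denseRange_pure hf (continuous_map_tensor _ v) ?_
  rintro _ ⟨x, rfl⟩
  exact (map_tensor_pure _ x v).trans (hv x) |>.symm
end

section
/- Let κ be a cardinal with κ < 2^ℵ₀ and let K be a type of cardinality κ. For every nonprincipal u ∈ βℕ the following are equivalent: (i) u is a weak P_{κ⁺}-point; (ii) for all f : K → βℕ and v ∈ Ultrafilter K with f̃(v) = u there exists α ∈ K with f(α) = u or f(α) principal; (iii) for all f : K → βℕ and v ∈ Ultrafilter K with f̃(v) = u, either {α : f(α) = u} ∈ v or {α : f(α) is principal} ∈ v; (iv) for all g : K × ℕ → ℕ, v ∈ Ultrafilter K and w ∈ βℕ with u = Ultrafilter.map g (v ⊗ w), there exists α ∈ K such that Ultrafilter.map (fun j => g (α, j)) w equals u or is principal; (v) for all g : K × ℕ → ℕ, v ∈ Ultrafilter K and w ∈ βℕ with u = Ultrafilter.map g (v ⊗ w), either {α : Ultrafilter.map (fun j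 => g (α, j)) w = u} ∈ v or {α : Ultrafilter.map (fun j => g (α, j)) w is principal} ∈ v. -/
/-- A weak `P_{κ⁺}`-point: a nonprincipal ultrafilter on `ℕ` not in the closure of any
set of ultrafilters of cardinality at most `κ` avoiding it and all principal ultrafilters. -/
def WeakPSuccPoint (κ : Cardinal) (u : Ultrafilter ℕ) : Prop :=
  ¬ IsPrincipal u ∧ ∀ A : Set (Ultrafilter ℕ), Cardinal.mk ↥A ≤ κ → u ∉ A →
    (∀ x ∈ A, ¬ IsPrincipal x) → u ∉ closure A

/-! Writing `u = f̃(v)` exhibits `u` in the closure of the `κ`-sized set `f '' B` for every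
`B ∈ v`, which turns the weak `P_{κ⁺}` property into the dichotomy (iii), and (iii) trivially gives
(ii). The tensor forms are the special case `f α = map (g (α, ·)) w`, for which
`f̃(v) = map g (v ⊗ w)`. Conversely every family `f : K → βℕ` is of that form when `κ ≤ 𝔠`:
a countable family `F` interpolating all functions on finite subsets of `K` pulls the product
filter `∏ f α` on `ℕ ^ K` back to a proper filter on `ℕ`, and any ultrafilter `w` refining it
works with `g (α, j) = F j α`. -/

open Filter Set Cardinal

lemma exists_injOn_restrict_fin {β : Type*} {t : Set (ℕ → β)} (ht : t.Finite) :
    ∃ n, InjOn (fun (s : ℕ → β) (i : Fin n) => s i) t := by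
  have hsep : ∀ s ∈ t, ∀ s' ∈ t, ∀ᶠ n in atTop,
      (fun i : Fin n => s i) = (fun i : Fin n => s' i) → s = s' := by
    intro s _ s' _
    by_cases hss' : s = s'
    · exact .of_forall fun _ _ => hss'
    obtain ⟨i, hi⟩ := Function.ne_iff.mp hss'
    filter_upwards [eventually_gt_atTop i] with n hn heq
    exact absurd (congrFun heq ⟨i, hn⟩) hi
  simp only [← eventually_all_finite ht] at hsep
  obtain ⟨n, hn⟩ := hsep.exists
  exact ⟨n, fun s hs s' hs' => hn s hs s' hs'⟩

/-- The Hewitt–Marczewski–Pondiczery theorem for `ℕ ^ K`: code `K` by binary sequences; finitely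
many codes are already separated by a finite prefix, and there are countably many functions of
prefixes. -/
lemma exists_seq_interpolating {K : Type} (hK : #K ≤ 2 ^ ℵ₀) :
    ∃ F : ℕ → K → ℕ, ∀ (t : Finset K) (ψ : K → ℕ), ∃ m, ∀ α ∈ t, F m α = ψ α := by
  obtain ⟨x⟩ : Nonempty (K ↪ (ℕ → Bool)) := by
    rw [← Cardinal.le_def, Cardinal.mk_arrow]
    simpa using hK
  obtain ⟨e, he⟩ := exists_surjective_nat (Σ n, (Fin n → Bool) → ℕ)
  refine ⟨fun m α => (e m).2 fun i => x α i, fun t ψ => ?_⟩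
  obtain ⟨n, hn⟩ := exists_injOn_restrict_fin ((t : Set K).toFinite.image x)
  have hinj : InjOn (fun (α : K) (i : Fin n) => x α i) t :=
    hn.comp x.injective.injOn (mapsTo_image _ _)
  obtain ⟨m, hm⟩ :=
    he ⟨n, Function.extend (fun α : t => fun i : Fin n => x α i) (fun α => ψ α) 0⟩
  refine ⟨m, fun α hα => ?_⟩
  dsimp only
  rw [hm]
  exact hinj.injective.extend_apply (fun α => ψ α) 0 ⟨α, hα⟩

lemma exists_ultrafilter_forall_map_eq {K : Type} (hK : #K ≤ 2 ^ ℵ₀) (f : K → Ultrafilter ℕ) :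
    ∃ (w : Ultrafilter ℕ) (g : K × ℕ → ℕ), ∀ α, Ultrafilter.map (fun j => g (α, j)) w = f α := by
  obtain ⟨F, hF⟩ := exists_seq_interpolating hK
  set P := Filter.pi fun α => (f α : Filter ℕ)
  have : (comap F P).NeBot := by
    refine comap_neBot_iff.mpr fun s hs => ?_
    obtain ⟨I, S, hS, hIS⟩ := mem_pi'.mp hs
    choose y hy using fun α => Ultrafilter.nonempty_of_mem (hS α)
    obtain ⟨m, hm⟩ := hF I y
    exact ⟨m, hIS fun α hα => (hm α hα).symm ▸ hy α⟩
  refine ⟨.of (comap F P), fun p => F p.2 p.1, fun α => Ultrafilter.coe_le_coe.mp ?_⟩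
  exact (tendsto_eval_pi _ α).comp (tendsto_comap.mono_left (Ultrafilter.of_le _))

lemma Ultrafilter.extend_eq_bind_s19 {X Y : Type*} (f : X → Ultrafilter Y) (v : Ultrafilter X) :
    Ultrafilter.extend f v = v.bind f := by
  rw [ultrafilter_extend_eq_iff, ultrafilter_converges_iff]
  rfl

lemma map_tensor_eq_bind {X Y Z : Type*} (g : X × Y → Z) (v : Ultrafilter X) (w : Ultrafilter Y) :
    Ultrafilter.map g (tensor v w) = v.bind fun x => Ultrafilter.map (fun y => g (x, y)) w :=
  rfl

lemma extend_map_eq_of_eq_map_tensor {X Y Z : Type*} {g : X × Y → Z} {v : Ultrafilter X}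
    {w : Ultrafilter Y} {u : Ultrafilter Z} (h : u = Ultrafilter.map g (tensor v w)) :
    Ultrafilter.extend (fun x => Ultrafilter.map (fun y => g (x, y)) w) v = u := by
  rw [Ultrafilter.extend_eq_bind_s19, h, map_tensor_eq_bind]

section Extend

variable {X γ : Type*} [TopologicalSpace γ] [T2Space γ] [CompactSpace γ] {f : X → γ}
  {v : Ultrafilter X} {c : γ}

lemma mem_closure_image_of_extend_eq (h : Ultrafilter.extend f v = c) {s : Set X} (hs : s ∈ v) :
    c ∈ closure (f '' s) :=
  mem_closure_iff_ultrafilter.mpr ⟨v.map f, image_mem_map hs, ultrafilter_extend_eq_iff.mp h⟩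

lemma exists_extend_eq_of_mem_closure_range (h : c ∈ closure (range f)) :
    ∃ v : Ultrafilter X, Ultrafilter.extend f v = c := by
  obtain ⟨U, hU, hUc⟩ := mem_closure_iff_ultrafilter.mp h
  rw [← image_univ] at hU
  exact ⟨.ofComapInfPrincipal hU,
    ultrafilter_extend_eq_iff.mpr (by rwa [Ultrafilter.ofComapInfPrincipal_eq_of_map])⟩

end Extend

lemma exists_or_of_mem_or_mem {K : Type*} {p q : K → Prop} {v : Ultrafilter K}
    (h : {α | p α} ∈ v ∨ {α | q α} ∈ v) : ∃ α, p α ∨ q α :=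
  h.elim (fun hp => (Ultrafilter.nonempty_of_mem hp).imp fun _ => .inl)
    fun hq => (Ultrafilter.nonempty_of_mem hq).imp fun _ => .inr

namespace WeakPSuccPoint

variable {κ : Cardinal} {K : Type} {u : Ultrafilter ℕ}

lemma mem_or_mem_of_extend_eq (hu : WeakPSuccPoint κ u) (hK : #K ≤ κ) {f : K → Ultrafilter ℕ}
    {v : Ultrafilter K} (hfv : Ultrafilter.extend f v = u) :
    {α | f α = u} ∈ v ∨ {α | IsPrincipal (f α)} ∈ v := by
  by_contra! h
  let B := {α | f α ≠ u ∧ ¬ IsPrincipal (f α)}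
  have hB : B ∈ v :=
    inter_mem (Ultrafilter.compl_mem_iff_notMem.mpr h.1) (Ultrafilter.compl_mem_iff_notMem.mpr h.2)
  refine hu.2 (f '' B) ((mk_image_le.trans (mk_set_le B)).trans hK) ?_ ?_
    (mem_closure_image_of_extend_eq hfv hB)
  · rintro ⟨α, hα, hαu⟩
    exact hα.1 hαu
  · rintro _ ⟨α, hα, rfl⟩
    exact hα.2

lemma of_forall_map_tensor (hκK : κ ≤ #K) (hK : #K ≤ 2 ^ ℵ₀) (hu : ¬ IsPrincipal u)
    (h : ∀ (g : K × ℕ → ℕ) (v : Ultrafilter K) (w : Ultrafilter ℕ),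
      u = Ultrafilter.map g (tensor v w) →
      ∃ α, Ultrafilter.map (fun j => g (α, j)) w = u ∨
        IsPrincipal (Ultrafilter.map (fun j => g (α, j)) w)) :
    WeakPSuccPoint κ u := by
  refine ⟨hu, fun A hA huA hAp hcl => ?_⟩
  have : Nonempty A := (closure_nonempty_iff.mp ⟨u, hcl⟩).to_subtype
  obtain ⟨e⟩ : Nonempty (A ↪ K) := (Cardinal.le_def _ _).mp (hA.trans hκK)
  set f : K → Ultrafilter ℕ := Subtype.val ∘ Function.invFun e
  have hf : range f = A := by
    rw [(Function.invFun_surjective e.injective).range_comp, Subtype.range_coe]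
  rw [← hf] at hcl huA hAp
  obtain ⟨v, hv⟩ := exists_extend_eq_of_mem_closure_range hcl
  obtain ⟨w, g, hg⟩ := exists_ultrafilter_forall_map_eq hK f
  obtain ⟨α, hα⟩ := h g v w (by rw [← hv, ← extend_map_eq_of_eq_map_tensor rfl, funext hg])
  rw [hg] at hα
  exact hα.elim (fun hαu => huA ⟨α, hαu⟩) (hAp _ ⟨α, rfl⟩)

end WeakPSuccPoint

theorem stmt19 (κ : Cardinal) (hκ : κ < (2 : Cardinal) ^ Cardinal.aleph0)
    (K : Type) (hK : Cardinal.mk K = κ)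
    (u : Ultrafilter ℕ) (hu : ¬ IsPrincipal u) :
    (WeakPSuccPoint κ u ↔ ∀ (f : K → Ultrafilter ℕ) (v : Ultrafilter K),
        Ultrafilter.extend f v = u → ∃ α : K, f α = u ∨ IsPrincipal (f α)) ∧
    (WeakPSuccPoint κ u ↔ ∀ (f : K → Ultrafilter ℕ) (v : Ultrafilter K),
        Ultrafilter.extend f v = u →
        {α : K | f α = u} ∈ v ∨ {α : K | IsPrincipal (f α)} ∈ v) ∧
    (WeakPSuccPoint κ u ↔ ∀ (g : K × ℕ → ℕ) (v : Ultrafilter K) (w : Ultrafilter ℕ),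
        u = Ultrafilter.map g (tensor v w) →
        ∃ α : K, Ultrafilter.map (fun j => g (α, j)) w = u ∨
          IsPrincipal (Ultrafilter.map (fun j => g (α, j)) w)) ∧
    (WeakPSuccPoint κ u ↔ ∀ (g : K × ℕ → ℕ) (v : Ultrafilter K) (w : Ultrafilter ℕ),
        u = Ultrafilter.map g (tensor v w) →
        {α : K | Ultrafilter.map (fun j => g (α, j)) w = u} ∈ v ∨
        {α : K | IsPrincipal (Ultrafilter.map (fun j => g (α, j)) w)} ∈ v) := by
  have of_tensor := WeakPSuccPoint.of_forall_map_tensor hK.ge (hK.trans_le hκ.le) hu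
  have mem_or_mem (h : WeakPSuccPoint κ u) (f : K → Ultrafilter ℕ) (v : Ultrafilter K)
      (hfv : Ultrafilter.extend f v = u) := h.mem_or_mem_of_extend_eq hK.le hfv
  refine ⟨⟨fun h f v hfv => exists_or_of_mem_or_mem (mem_or_mem h f v hfv), fun h => ?_⟩,
    ⟨mem_or_mem, fun h => ?_⟩,
    ⟨fun h g v w hgu => exists_or_of_mem_or_mem (mem_or_mem h _ v
      (extend_map_eq_of_eq_map_tensor hgu)), of_tensor⟩,
    ⟨fun h g v w hgu => mem_or_mem h _ v (extend_map_eq_of_eq_map_tensor hgu), fun h => ?_⟩⟩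
  · exact of_tensor fun g v w hgu => h _ v (extend_map_eq_of_eq_map_tensor hgu)
  · exact of_tensor fun g v w hgu =>
      exists_or_of_mem_or_mem (h _ v (extend_map_eq_of_eq_map_tensor hgu))
  · exact of_tensor fun g v w hgu => exists_or_of_mem_or_mem (h g v w hgu)
end
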